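/- Let K ⊂ {(x,y) ∈ ℝ² : 0 < x ≤ y} be a compact set, let E := {ξ ∈ ℝ^{2×2} : (λ₁(ξ), λ₂(ξ)) ∈ K}, and let (U_n) be the sequence of open sets from the standard construction (with any decreasing sequence 0 < ε_n < a₀/2, ε_n → 0, where a₀ = min_{(a,b)∈K} a). Then (U_n) is an in-approximation of E; in particular U_n ⊆ (U_{n+1})^{rc} for every n and sup_{ξ ∈ U_n} dist(ξ, E) → 0 as n → ∞. -/

import Mathlib

open scoped BigOperators

/-- Square of the Frobenius norm of a 2×2 real matrix. -/
noncomputable def frobSq (ξ : Matrix (Fin 2) (Fin 2) ℝ) : ℝ := ∑ i, ∑ j, (ξ i j) ^ 2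

/-- The Frobenius norm of a 2×2 real matrix. -/
noncomputable def frobNorm (ξ : Matrix (Fin 2) (Fin 2) ℝ) : ℝ := Real.sqrt (frobSq ξ)

/-- The smallest singular value of a 2×2 real matrix. -/
noncomputable def lam1 (ξ : Matrix (Fin 2) (Fin 2) ℝ) : ℝ :=
  (Real.sqrt (frobSq ξ + 2 * |ξ.det|) - Real.sqrt (frobSq ξ - 2 * |ξ.det|)) / 2

/-- The largest singular value of a 2×2 real matrix. -/
noncomputable def lam2 (ξ : Matrix (Fin 2) (Fin 2) ℝ) : ℝ :=
  (Real.sqrt (frobSq ξ + 2 * |ξ.det|) + Real.sqrt (frobSq ξ - 2 * |ξ.det|)) / 2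

/-- A function on 2×2 matrices is rank one convex if it is convex along rank one segments. -/
def RankOneConvex (f : Matrix (Fin 2) (Fin 2) ℝ → ℝ) : Prop :=
  ∀ (ξ η : Matrix (Fin 2) (Fin 2) ℝ) (t : ℝ), t ∈ Set.Icc (0 : ℝ) 1 →
    (ξ - η).rank = 1 → f (t • ξ + (1 - t) • η) ≤ t * f ξ + (1 - t) * f η

/-- The rank one convex hull `E^{rc}` of a set of 2×2 matrices. -/
def rcHull (E : Set (Matrix (Fin 2) (Fin 2) ℝ)) : Set (Matrix (Fin 2) (Fin 2) ℝ) :=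
  {ξ | ∀ f : Matrix (Fin 2) (Fin 2) ℝ → ℝ,
    RankOneConvex f → (∀ η ∈ E, f η ≤ 0) → f ξ ≤ 0}

/-- The rank one convex hull `U^{rc}` of an open set of 2×2 matrices. -/
def rcHullOpen (U : Set (Matrix (Fin 2) (Fin 2) ℝ)) : Set (Matrix (Fin 2) (Fin 2) ℝ) :=
  {ξ | ∃ E : Set (Matrix (Fin 2) (Fin 2) ℝ), E ⊆ U ∧ IsCompact E ∧ ξ ∈ rcHull E}

/-- A function on 2×2 matrices is polyconvex if it is a convex function of (ξ, det ξ). -/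
def PolyconvexFun (f : Matrix (Fin 2) (Fin 2) ℝ → ℝ) : Prop :=
  ∃ g : Matrix (Fin 2) (Fin 2) ℝ × ℝ → ℝ,
    ConvexOn ℝ Set.univ g ∧ ∀ ξ, f ξ = g (ξ, ξ.det)

/-- The polyconvex hull `E^{pc}` of a set of 2×2 matrices. -/
def pcHull (E : Set (Matrix (Fin 2) (Fin 2) ℝ)) : Set (Matrix (Fin 2) (Fin 2) ℝ) :=
  {ξ | ∀ f : Matrix (Fin 2) (Fin 2) ℝ → ℝ,
    PolyconvexFun f → (∀ η ∈ E, f η ≤ 0) → f ξ ≤ 0}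

/-- The polyconvex hull `U^{pc}` of an open set of 2×2 matrices. -/
def pcHullOpen (U : Set (Matrix (Fin 2) (Fin 2) ℝ)) : Set (Matrix (Fin 2) (Fin 2) ℝ) :=
  {ξ | ∃ E : Set (Matrix (Fin 2) (Fin 2) ℝ), E ⊆ U ∧ IsCompact E ∧ ξ ∈ pcHull E}

/-- A set of 2×2 matrices is polyconvex. -/
def PolyconvexSet (A : Set (Matrix (Fin 2) (Fin 2) ℝ)) : Prop :=
  ∀ (ξ : Fin 5 → Matrix (Fin 2) (Fin 2) ℝ) (t : Fin 5 → ℝ),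
    (∀ i, ξ i ∈ A) → (∀ i, 0 ≤ t i) → (∑ i, t i) = 1 →
    (∑ i, t i * (ξ i).det) = (∑ i, t i • ξ i).det →
    (∑ i, t i • ξ i) ∈ A

/-- The polyconvex hull `Pco E`: the smallest polyconvex set containing `E`. -/
def Pco (E : Set (Matrix (Fin 2) (Fin 2) ℝ)) : Set (Matrix (Fin 2) (Fin 2) ℝ) :=
  ⋂₀ {A | PolyconvexSet A ∧ E ⊆ A}

/-- A set of 2×2 matrices is isotropic if it is invariant under orthogonal transformations. -/
def Isotropic (E : Set (Matrix (Fin 2) (Fin 2) ℝ)) : Prop :=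
  ∀ R S : Matrix (Fin 2) (Fin 2) ℝ, R * R.transpose = 1 → S * S.transpose = 1 → ∀ ξ ∈ E, R * ξ * S ∈ E

/-- The distance (w.r.t. the Frobenius norm) from a matrix to a set of matrices. -/
noncomputable def distE (ξ : Matrix (Fin 2) (Fin 2) ℝ) (E : Set (Matrix (Fin 2) (Fin 2) ℝ)) : ℝ :=
  sInf ((fun η => frobNorm (ξ - η)) '' E)

/-- The function `f_θ(x,y) = xy + θ(y-x)`. -/
def ftheta (θ : ℝ) (p : ℝ × ℝ) : ℝ := p.1 * p.2 + θ * (p.2 - p.1)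

/-- The gradient of a map `u : ℝ² → ℝ²` at `x`, as a 2×2 matrix. -/
noncomputable def gradMatrix (u : (Fin 2 → ℝ) → (Fin 2 → ℝ)) (x : Fin 2 → ℝ) :
    Matrix (Fin 2) (Fin 2) ℝ :=
  LinearMap.toMatrix' (fderiv ℝ u x).toLinearMap



/-!
Split a matrix into its conformal and anticonformal parts: `ξ = svdForm u v (λ₂ ξ) y` with
`|y| = λ₁ ξ`, where for fixed unit vectors `u`, `v` the map `(a, b) ↦ svdForm u v a b` is linear,
has singular values `|a|, |b|`, and sends horizontal and vertical segments to rank one segments.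
Hence every matrix with `λ₁ ≤ L`, `λ₂ ≤ M` lies in the rank one convex hull of the four matrices
`svdForm u v (±M) (±L)`, all of which have singular values `(L, M)`. As `ε_{n+1} ≤ ε_n`, every
point of `R^n_p` lies below some point of `R^{n+1}_p`, which gives `U_n ⊆ (U_{n+1})^{rc}`.
Moving the coordinates `(λ₂ ξ, y)` to `(p₂, ±p₁)` lands in `E` at distance at most `√5 ε_n`.
-/

lemma Matrix.rank_pos_of_ne_zero {m n K : Type*} [Finite m] [Fintype n] [Field K]
    {A : Matrix m n K} (h : A ≠ 0) : 0 < A.rank := by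
  rw [Matrix.rank_eq_finrank_span_cols, Nat.pos_iff_ne_zero, Ne, Submodule.finrank_eq_zero,
    Submodule.span_eq_bot]
  contrapose! h
  ext i j
  exact congrFun (h _ ⟨j, rfl⟩) i

lemma Matrix.rank_eq_one_of_det_eq_zero {K : Type*} [Field K] {A : Matrix (Fin 2) (Fin 2) K}
    (h0 : A ≠ 0) (hdet : A.det = 0) : A.rank = 1 := by
  have hadj : A.adjugate ≠ 0 := by
    contrapose! h0
    simpa [h0, Matrix.adjugate_zero] using (Matrix.adjugate_adjugate A (by decide)).symm
  have hsum := Matrix.rank_add_rank_le_card_of_mul_eq_zero (A := A) (B := A.adjugate)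
    (by rw [Matrix.mul_adjugate, hdet, zero_smul])
  rw [Fintype.card_fin] at hsum
  have := Matrix.rank_pos_of_ne_zero h0
  have := Matrix.rank_pos_of_ne_zero hadj
  omega

lemma lam1_eq_min_and_lam2_eq_max {ξ : Matrix (Fin 2) (Fin 2) ℝ} {a b : ℝ}
    (hfrob : frobSq ξ = a ^ 2 + b ^ 2) (hdet : |ξ.det| = |a * b|) :
    lam1 ξ = min |a| |b| ∧ lam2 ξ = max |a| |b| := by
  have hplus : √(frobSq ξ + 2 * |ξ.det|) = |a| + |b| := by
    rw [hfrob, hdet, abs_mul, ← sq_abs a, ← sq_abs b,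
      show |a| ^ 2 + |b| ^ 2 + 2 * (|a| * |b|) = (|a| + |b|) ^ 2 by ring]
    exact Real.sqrt_sq (by positivity)
  have hminus : √(frobSq ξ - 2 * |ξ.det|) = |(|a| - |b|)| := by
    rw [hfrob, hdet, abs_mul, ← sq_abs a, ← sq_abs b,
      show |a| ^ 2 + |b| ^ 2 - 2 * (|a| * |b|) = (|a| - |b|) ^ 2 by ring]
    exact Real.sqrt_sq_eq_abs _
  rw [lam1, lam2, hplus, hminus]
  rcases le_total |a| |b| with h | h
  · rw [abs_of_nonpos (sub_nonpos.2 h), min_eq_left h, max_eq_right h]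
    constructor <;> ring
  · rw [abs_of_nonneg (sub_nonneg.2 h), min_eq_right h, max_eq_left h]
    constructor <;> ring

lemma lam2_nonneg (ξ : Matrix (Fin 2) (Fin 2) ℝ) : 0 ≤ lam2 ξ := by
  unfold lam2; positivity

def conformalMat (u : ℝ × ℝ) : Matrix (Fin 2) (Fin 2) ℝ := !![u.1, -u.2; u.2, u.1]

def anticonformalMat (v : ℝ × ℝ) : Matrix (Fin 2) (Fin 2) ℝ := !![v.1, v.2; v.2, -v.1]

lemma conformalMat_smul (c : ℝ) (u : ℝ × ℝ) : conformalMat (c • u) = c • conformalMat u := by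
  ext i j; fin_cases i <;> fin_cases j <;> simp [conformalMat]

lemma anticonformalMat_smul (c : ℝ) (v : ℝ × ℝ) :
    anticonformalMat (c • v) = c • anticonformalMat v := by
  ext i j; fin_cases i <;> fin_cases j <;> simp [anticonformalMat]

noncomputable def svdForm (u v : ℝ × ℝ) (a b : ℝ) : Matrix (Fin 2) (Fin 2) ℝ :=
  ((a + b) / 2) • conformalMat u + ((a - b) / 2) • anticonformalMat v

section

variable {u v : ℝ × ℝ}

lemma frobSq_svdForm (hu : u.1 ^ 2 + u.2 ^ 2 = 1) (hv : v.1 ^ 2 + v.2 ^ 2 = 1) (a b : ℝ) :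
    frobSq (svdForm u v a b) = a ^ 2 + b ^ 2 := by
  simp only [frobSq, Fin.sum_univ_two, svdForm, conformalMat, anticonformalMat, Matrix.add_apply,
    Matrix.smul_apply, Matrix.of_apply, Matrix.cons_val', Matrix.cons_val_zero,
    Matrix.cons_val_one, Matrix.cons_val_fin_one, smul_eq_mul]
  linear_combination (((a + b) / 2) ^ 2 * 2) * hu + (((a - b) / 2) ^ 2 * 2) * hv

lemma det_svdForm (hu : u.1 ^ 2 + u.2 ^ 2 = 1) (hv : v.1 ^ 2 + v.2 ^ 2 = 1) (a b : ℝ) :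
    (svdForm u v a b).det = a * b := by
  simp only [Matrix.det_fin_two, svdForm, conformalMat, anticonformalMat, Matrix.add_apply,
    Matrix.smul_apply, Matrix.of_apply, Matrix.cons_val', Matrix.cons_val_zero,
    Matrix.cons_val_one, Matrix.cons_val_fin_one, smul_eq_mul]
  linear_combination ((a + b) / 2) ^ 2 * hu - ((a - b) / 2) ^ 2 * hv

lemma svdForm_convexComb (t a b a' b' : ℝ) :
    t • svdForm u v a b + (1 - t) • svdForm u v a' b' =
      svdForm u v (t * a + (1 - t) * a') (t * b + (1 - t) * b') := by
  simp only [svdForm]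
  module

lemma svdForm_sub (a b a' b' : ℝ) :
    svdForm u v a b - svdForm u v a' b' = svdForm u v (a - a') (b - b') := by
  simp only [svdForm]
  module

lemma lam1_svdForm (hu : u.1 ^ 2 + u.2 ^ 2 = 1) (hv : v.1 ^ 2 + v.2 ^ 2 = 1) (a b : ℝ) :
    lam1 (svdForm u v a b) = min |a| |b| :=
  (lam1_eq_min_and_lam2_eq_max (frobSq_svdForm hu hv a b) (by rw [det_svdForm hu hv])).1

lemma lam2_svdForm (hu : u.1 ^ 2 + u.2 ^ 2 = 1) (hv : v.1 ^ 2 + v.2 ^ 2 = 1) (a b : ℝ) :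
    lam2 (svdForm u v a b) = max |a| |b| :=
  (lam1_eq_min_and_lam2_eq_max (frobSq_svdForm hu hv a b) (by rw [det_svdForm hu hv])).2

lemma svdForm_ne_zero (hu : u.1 ^ 2 + u.2 ^ 2 = 1) (hv : v.1 ^ 2 + v.2 ^ 2 = 1) {a b : ℝ}
    (hab : a ≠ 0 ∨ b ≠ 0) : svdForm u v a b ≠ 0 := by
  intro h
  have h0 : a ^ 2 + b ^ 2 = 0 := by
    rw [← frobSq_svdForm hu hv, h]; simp [frobSq]
  rcases hab with ha | hb
  · exact ha (by nlinarith [sq_nonneg b])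
  · exact hb (by nlinarith [sq_nonneg a])

lemma rank_svdForm_sub_of_ne_left (hu : u.1 ^ 2 + u.2 ^ 2 = 1) (hv : v.1 ^ 2 + v.2 ^ 2 = 1)
    {a a' : ℝ} (b : ℝ) (h : a ≠ a') : (svdForm u v a b - svdForm u v a' b).rank = 1 := by
  rw [svdForm_sub]
  refine Matrix.rank_eq_one_of_det_eq_zero (svdForm_ne_zero hu hv (.inl (sub_ne_zero.2 h))) ?_
  rw [det_svdForm hu hv, sub_self, mul_zero]

lemma rank_svdForm_sub_of_ne_right (hu : u.1 ^ 2 + u.2 ^ 2 = 1) (hv : v.1 ^ 2 + v.2 ^ 2 = 1)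
    (a : ℝ) {b b' : ℝ} (h : b ≠ b') : (svdForm u v a b - svdForm u v a b').rank = 1 := by
  rw [svdForm_sub]
  refine Matrix.rank_eq_one_of_det_eq_zero (svdForm_ne_zero hu hv (.inr (sub_ne_zero.2 h))) ?_
  rw [det_svdForm hu hv, sub_self, zero_mul]

end

lemma exists_unit_smul (w : ℝ × ℝ) :
    ∃ u : ℝ × ℝ, u.1 ^ 2 + u.2 ^ 2 = 1 ∧ w = √(w.1 ^ 2 + w.2 ^ 2) • u := by
  set m := √(w.1 ^ 2 + w.2 ^ 2)
  have hm : m ^ 2 = w.1 ^ 2 + w.2 ^ 2 := Real.sq_sqrt (by positivity)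
  rcases eq_or_ne m 0 with h0 | h0
  · have hw : w.1 ^ 2 + w.2 ^ 2 = 0 := by rw [← hm, h0, sq, mul_zero]
    have hw₁ : w.1 = 0 := by nlinarith [sq_nonneg w.1, sq_nonneg w.2]
    have hw₂ : w.2 = 0 := by nlinarith [sq_nonneg w.1, sq_nonneg w.2]
    exact ⟨(1, 0), by norm_num, by rw [h0, zero_smul]; exact Prod.ext hw₁ hw₂⟩
  · refine ⟨m⁻¹ • w, ?_, by rw [smul_inv_smul₀ h0]⟩
    simp only [Prod.smul_fst, Prod.smul_snd, smul_eq_mul]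
    field_simp
    linarith

lemma exists_eq_svdForm (ξ : Matrix (Fin 2) (Fin 2) ℝ) :
    ∃ u v : ℝ × ℝ, ∃ y : ℝ, u.1 ^ 2 + u.2 ^ 2 = 1 ∧ v.1 ^ 2 + v.2 ^ 2 = 1 ∧
      ξ = svdForm u v (lam2 ξ) y ∧ |y| = lam1 ξ := by
  set w : ℝ × ℝ := ((ξ 0 0 + ξ 1 1) / 2, (ξ 1 0 - ξ 0 1) / 2)
  set z : ℝ × ℝ := ((ξ 0 0 - ξ 1 1) / 2, (ξ 1 0 + ξ 0 1) / 2)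
  obtain ⟨u, hu, hw⟩ := exists_unit_smul w
  obtain ⟨v, hv, hz⟩ := exists_unit_smul z
  set m := √(w.1 ^ 2 + w.2 ^ 2)
  set n := √(z.1 ^ 2 + z.2 ^ 2)
  have hξ : ξ = svdForm u v (m + n) (m - n) := by
    rw [svdForm, show (m + n + (m - n)) / 2 = m by ring, show (m + n - (m - n)) / 2 = n by ring,
      ← conformalMat_smul, ← anticonformalMat_smul, ← hw, ← hz]
    ext i j; fin_cases i <;> fin_cases j <;> simp [w, z, conformalMat, anticonformalMat] <;> ring
  have hm : 0 ≤ m := Real.sqrt_nonneg _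
  have hn : 0 ≤ n := Real.sqrt_nonneg _
  have hle : |m - n| ≤ |m + n| := by
    rw [abs_of_nonneg (add_nonneg hm hn), abs_le]
    constructor <;> linarith
  refine ⟨u, v, m - n, hu, hv, ?_, ?_⟩
  · rw [hξ, lam2_svdForm hu hv, max_eq_left hle, abs_of_nonneg (add_nonneg hm hn)]
  · rw [hξ, lam1_svdForm hu hv, min_eq_right hle]

lemma subset_rcHull (E : Set (Matrix (Fin 2) (Fin 2) ℝ)) : E ⊆ rcHull E :=
  fun _ hξ _ _ hf => hf _ hξ

lemma convexComb_mem_rcHull {E : Set (Matrix (Fin 2) (Fin 2) ℝ)}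
    {ξ η : Matrix (Fin 2) (Fin 2) ℝ} (hξ : ξ ∈ rcHull E) (hη : η ∈ rcHull E)
    (hrank : (ξ - η).rank = 1) {t : ℝ}
    (ht : t ∈ Set.Icc (0 : ℝ) 1) : t • ξ + (1 - t) • η ∈ rcHull E := by
  intro f hf hfE
  have h₁ : t * f ξ ≤ 0 := mul_nonpos_of_nonneg_of_nonpos ht.1 (hξ f hf hfE)
  have h₂ : (1 - t) * f η ≤ 0 := mul_nonpos_of_nonneg_of_nonpos (sub_nonneg.2 ht.2) (hη f hf hfE)
  linarith [hf ξ η t ht hrank]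

lemma exists_convexComb_of_abs_le {M x : ℝ} (hM : 0 < M) (hx : |x| ≤ M) :
    ∃ t ∈ Set.Icc (0 : ℝ) 1, t * M + (1 - t) * -M = x := by
  obtain ⟨hx₁, hx₂⟩ := abs_le.1 hx
  refine ⟨(x + M) / (2 * M), ⟨div_nonneg (by linarith) (by positivity),
    (div_le_one (by positivity)).2 (by linarith)⟩, ?_⟩
  field_simp
  ring

lemma svdForm_mem_rcHull_of_corners {E : Set (Matrix (Fin 2) (Fin 2) ℝ)} {u v : ℝ × ℝ}
    (hu : u.1 ^ 2 + u.2 ^ 2 = 1) (hv : v.1 ^ 2 + v.2 ^ 2 = 1) {M L x y : ℝ} (hM : 0 < M)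
    (hL : 0 < L) (hx : |x| ≤ M) (hy : |y| ≤ L)
    (hcorner : ∀ a b, |a| = M → |b| = L → svdForm u v a b ∈ rcHull E) :
    svdForm u v x y ∈ rcHull E := by
  obtain ⟨s, hs, rfl⟩ := exists_convexComb_of_abs_le hL hy
  obtain ⟨t, ht, rfl⟩ := exists_convexComb_of_abs_le hM hx
  have hside : ∀ a, |a| = M → svdForm u v a (s * L + (1 - s) * -L) ∈ rcHull E := by
    intro a ha
    have := convexComb_mem_rcHull (hcorner a L ha (abs_of_pos hL))
      (hcorner a (-L) ha (by rw [abs_neg, abs_of_pos hL]))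
      (rank_svdForm_sub_of_ne_right hu hv a (by linarith)) hs
    rwa [svdForm_convexComb, show s * a + (1 - s) * a = a by ring] at this
  have := convexComb_mem_rcHull (hside M (abs_of_pos hM))
    (hside (-M) (by rw [abs_neg, abs_of_pos hM]))
    (rank_svdForm_sub_of_ne_left hu hv _ (by linarith)) ht
  rwa [svdForm_convexComb, show ∀ c : ℝ, t * c + (1 - t) * c = c from fun c => by ring] at this

lemma mem_rcHullOpen_of_lam_le {U : Set (Matrix (Fin 2) (Fin 2) ℝ)}
    {ξ : Matrix (Fin 2) (Fin 2) ℝ} {L M : ℝ} (hL : 0 < L) (hLM : L ≤ M)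
    (hU : {η | lam1 η = L ∧ lam2 η = M} ⊆ U)
    (h₁ : lam1 ξ ≤ L) (h₂ : lam2 ξ ≤ M) : ξ ∈ rcHullOpen U := by
  obtain ⟨u, v, y, hu, hv, hξ, hy⟩ := exists_eq_svdForm ξ
  have hM : 0 < M := hL.trans_le hLM
  set corners := (fun ab : ℝ × ℝ => svdForm u v ab.1 ab.2) '' ({M, -M} ×ˢ {L, -L})
  refine ⟨corners, ?_, (((Set.toFinite _).prod (Set.toFinite _)).image _).isCompact, ?_⟩
  · rintro _ ⟨⟨a, b⟩, ⟨ha, hb⟩, rfl⟩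
    have ha : |a| = M := by rcases ha with rfl | rfl <;> simp [abs_of_pos hM]
    have hb : |b| = L := by rcases hb with rfl | rfl <;> simp [abs_of_pos hL]
    apply hU
    rw [Set.mem_ofPred, lam1_svdForm hu hv, lam2_svdForm hu hv, ha, hb]
    exact ⟨min_eq_right hLM, max_eq_left hLM⟩
  · rw [hξ]
    refine svdForm_mem_rcHull_of_corners hu hv hM hL ?_ (hy ▸ h₁) fun a b ha hb => ?_
    · rwa [abs_of_nonneg (lam2_nonneg _)]
    apply subset_rcHull
    refine ⟨(a, b), ⟨?_, ?_⟩, rfl⟩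
    · rcases abs_eq hM.le |>.1 ha with rfl | rfl <;> simp
    · rcases abs_eq hL.le |>.1 hb with rfl | rfl <;> simp

lemma exists_lam_eq_frobNorm_sub_eq (ξ : Matrix (Fin 2) (Fin 2) ℝ) {a b : ℝ} (ha : 0 ≤ a)
    (hab : a ≤ b) : ∃ η, lam1 η = a ∧ lam2 η = b ∧
      frobNorm (ξ - η) = √((lam1 ξ - a) ^ 2 + (lam2 ξ - b) ^ 2) := by
  obtain ⟨u, v, y, hu, hv, hξ, hy⟩ := exists_eq_svdForm ξ
  set y' := if 0 ≤ y then a else -a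
  have hy' : |y'| = a := by unfold y'; split_ifs <;> simp [abs_of_nonneg ha]
  have hdiff : (y - y') ^ 2 = (lam1 ξ - a) ^ 2 := by
    rw [← hy]; unfold y'
    split_ifs with h
    · rw [abs_of_nonneg h]
    · rw [abs_of_neg (not_le.1 h)]; ring
  refine ⟨svdForm u v b y', ?_, ?_, ?_⟩
  · rw [lam1_svdForm hu hv, hy', abs_of_nonneg (ha.trans hab), min_eq_right hab]
  · rw [lam2_svdForm hu hv, hy', abs_of_nonneg (ha.trans hab), max_eq_left hab]
  · rw [frobNorm, hξ, svdForm_sub, frobSq_svdForm hu hv, hdiff, ← hξ, add_comm]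

lemma distE_le_frobNorm_sub {E : Set (Matrix (Fin 2) (Fin 2) ℝ)} (ξ : Matrix (Fin 2) (Fin 2) ℝ)
    {η : Matrix (Fin 2) (Fin 2) ℝ} (hη : η ∈ E) : distE ξ E ≤ frobNorm (ξ - η) :=
  csInf_le ⟨0, by rintro _ ⟨_, -, rfl⟩; exact Real.sqrt_nonneg _⟩ ⟨η, hη, rfl⟩

/-- The rectangle `R^n_p` of the standard construction, for `ε = ε_n`. -/
def rect (ε : ℝ) (p : ℝ × ℝ) : Set (ℝ × ℝ) :=
  {q | p.1 - 2 * ε < q.1 ∧ q.1 < p.1 - ε ∧ p.2 - ε < q.2 ∧ q.2 < p.2 - ε / 2}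

lemma exists_mem_rect_ge {p q : ℝ × ℝ} {δ ε : ℝ} (hδ : 0 < δ) (hδε : δ ≤ ε)
    (hq : q ∈ rect ε p) :
    ∃ q' ∈ rect δ p, q.1 ≤ q'.1 ∧ q.2 ≤ q'.2 := by
  obtain ⟨-, h₁, -, h₂⟩ := hq
  refine ⟨(max q.1 (p.1 - 3 / 2 * δ), max q.2 (p.2 - 3 / 4 * δ)), ⟨?_, ?_, ?_, ?_⟩,
    le_max_left _ _, le_max_left _ _⟩
  · exact (by linarith : p.1 - 2 * δ < p.1 - 3 / 2 * δ).trans_le (le_max_right _ _)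
  · exact max_lt (by linarith) (by linarith)
  · exact (by linarith : p.2 - δ < p.2 - 3 / 4 * δ).trans_le (le_max_right _ _)
  · exact max_lt (by linarith) (by linarith)

theorem standard_construction_inApproximation_general (K : Set (ℝ × ℝ))
    (hKsub : K ⊆ {p : ℝ × ℝ | 0 < p.1 ∧ p.1 ≤ p.2})
    (E : Set (Matrix (Fin 2) (Fin 2) ℝ)) (hE : E = {ξ | (lam1 ξ, lam2 ξ) ∈ K})
    (ε : ℕ → ℝ) (hεanti : Antitone ε)
    (hεpos : ∀ n, 0 < ε n) (hεlt : ∀ n, ε n < sInf (Prod.fst '' K) / 2)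
    (hε0 : Filter.Tendsto ε Filter.atTop (nhds 0))
    (U : ℕ → Set (Matrix (Fin 2) (Fin 2) ℝ))
    (hU : ∀ n, U n = {ξ | ∃ p ∈ K,
      p.1 - 2 * ε n < lam1 ξ ∧ lam1 ξ < p.1 - ε n ∧
      p.2 - ε n < lam2 ξ ∧ lam2 ξ < p.2 - ε n / 2}) :
    (∀ n, U n ⊆ rcHullOpen (U (n + 1))) ∧
    (∀ r : ℝ, 0 < r → ∃ N : ℕ, ∀ n ≥ N, ∀ ξ ∈ U n, distE ξ E ≤ r) := by
  have hU' : ∀ n, U n = {ξ | ∃ p ∈ K, (lam1 ξ, lam2 ξ) ∈ rect (ε n) p} := hU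
  refine ⟨fun n ξ hξ => ?_, fun r hr => ?_⟩
  · obtain ⟨p, hpK, hξp⟩ := hU' n ▸ hξ
    have hp := (hKsub hpK).2
    have hinf : sInf (Prod.fst '' K) ≤ p.1 :=
      csInf_le ⟨0, by rintro _ ⟨q, hq, rfl⟩; exact (hKsub hq).1.le⟩ ⟨p, hpK, rfl⟩
    obtain ⟨⟨L, M⟩, hLM, h₁, h₂⟩ := exists_mem_rect_ge (hεpos _) (hεanti n.le_succ) hξp
    have hεK := hεlt (n + 1)
    refine mem_rcHullOpen_of_lam_le (by linarith [hLM.1]) (by linarith [hLM.2.1, hLM.2.2.1]) ?_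
      h₁ h₂
    rintro η ⟨hη₁, hη₂⟩
    rw [hU']
    exact ⟨p, hpK, by rwa [hη₁, hη₂]⟩
  · obtain ⟨N, hN⟩ := Metric.tendsto_atTop.1 hε0 (r / 3) (by positivity)
    refine ⟨N, fun n hn ξ hξ => ?_⟩
    obtain ⟨p, hpK, h₁, h₂, h₃, h₄⟩ := hU' n ▸ hξ
    have hεr : ε n < r / 3 := by simpa [abs_of_pos (hεpos n)] using hN n hn
    obtain ⟨hp₁, hp⟩ := hKsub hpK
    obtain ⟨η, hη₁, hη₂, hdist⟩ := exists_lam_eq_frobNorm_sub_eq ξ hp₁.le hp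
    calc distE ξ E ≤ frobNorm (ξ - η) :=
          distE_le_frobNorm_sub ξ (by rw [hE, Set.mem_ofPred, hη₁, hη₂]; exact hpK)
      _ = √((lam1 ξ - p.1) ^ 2 + (lam2 ξ - p.2) ^ 2) := hdist
      _ ≤ r := (Real.sqrt_le_left hr.le).2 (by nlinarith [hεpos n])

/-- the sets `U_n` of the standard construction form an in-approximation of `E`. -/
theorem standard_construction_inApproximation (K : Set (ℝ × ℝ)) (hKc : IsCompact K)
    (hKne : K.Nonempty)
    (hKsub : K ⊆ {p : ℝ × ℝ | 0 < p.1 ∧ p.1 ≤ p.2})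
    (E : Set (Matrix (Fin 2) (Fin 2) ℝ)) (hE : E = {ξ | (lam1 ξ, lam2 ξ) ∈ K})
    (ε : ℕ → ℝ) (hεanti : Antitone ε)
    (hεpos : ∀ n, 0 < ε n) (hεlt : ∀ n, ε n < sInf (Prod.fst '' K) / 2)
    (hε0 : Filter.Tendsto ε Filter.atTop (nhds 0))
    (U : ℕ → Set (Matrix (Fin 2) (Fin 2) ℝ))
    (hU : ∀ n, U n = {ξ | ∃ p ∈ K,
      p.1 - 2 * ε n < lam1 ξ ∧ lam1 ξ < p.1 - ε n ∧
      p.2 - ε n < lam2 ξ ∧ lam2 ξ < p.2 - ε n / 2}) :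
    (∀ n, U n ⊆ rcHullOpen (U (n + 1))) ∧
    (∀ r : ℝ, 0 < r → ∃ N : ℕ, ∀ n ≥ N, ∀ ξ ∈ U n, distE ξ E ≤ r) :=
  standard_construction_inApproximation_general K hKsub E hE ε hεanti hεpos hεlt hε0 U hU
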